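/- Let $V$ be a Hilbert space, $\beta \in (1/2, 1)$ and $T > 0$. Suppose there is NO constant $C>0$ such that $\|f\|_{L^2(0,T;V)}^2 \le C(\|f(0)\|_V^2 + [f]_{H^\beta(0,T;V)}^2)$ for all $f \in H^\beta(0,T;V)$. Then one obtains a contradiction; equivalently: the norm $f \mapsto (\|f(0)\|_V^2 + [f]_{H^\beta(0,T;V)}^2)^{1/2}$ is equivalent to the standard norm $(\|f\|_{L^2(0,T;V)}^2 + [f]_{H^\beta(0,T;V)}^2)^{1/2}$ on $H^\beta(0,T;V)$. -/

import Mathlib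

/-!
Let `A(a)` be the mean of `f` over `(a/2, a)`. On `(a/2, a) × (a/4, a/2)` one has `t - s ≤ a`, so
Jensen's inequality gives `‖A(a) - A(a/2)‖² ≤ 8 a^(2β-1) [f]²`. For `β > 1/2` these dyadic
increments decay geometrically, and `A(a) → f(0)`, hence `‖A(a) - f(0)‖² ≲ a^(2β-1) [f]²`.
Comparing `f(0)` with `A(T)`, which the `L²` norm controls, gives one inequality. Comparing `f(t)`
with `A(t)`, which the inner Gagliardo integral at `t` controls, and `A(t)` with `f(0)`, then
integrating in `t`, gives the other.
-/

open MeasureTheory Set Filter Topology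

theorem sq_norm_le_two_mul_add_sq_norm_sub {E : Type*} [SeminormedAddGroup E] (u v : E) :
    ‖u‖ ^ 2 ≤ 2 * (‖v‖ ^ 2 + ‖u - v‖ ^ 2) :=
  (pow_le_pow_left₀ (norm_nonneg u) (norm_le_insert' u v) 2).trans add_sq_le

theorem le_mul_toReal_of_ofReal_le_mul {x c : ℝ} {y : ENNReal} (hc : 0 ≤ c) (hy : y ≠ ⊤)
    (h : ENNReal.ofReal x ≤ ENNReal.ofReal c * y) : x ≤ c * y.toReal := by
  have := (ENNReal.ofReal_le_iff_le_toReal (ENNReal.mul_ne_top ENNReal.ofReal_ne_top hy)).1 h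
  rwa [ENNReal.toReal_mul, ENNReal.toReal_ofReal hc] at this

section Average

variable {α E : Type*} [MeasurableSpace α] [NormedAddCommGroup E] [NormedSpace ℝ E]
  {μ : Measure α} {s : Set α}

theorem ofReal_sq_norm_setAverage_le [CompleteSpace E] {f : α → E} (hs : μ s ≠ ⊤)
    (hf : IntegrableOn f s μ) :
    ENNReal.ofReal (‖⨍ x in s, f x ∂μ‖ ^ 2) ≤
      (∫⁻ x in s, ENNReal.ofReal (‖f x‖ ^ 2) ∂μ) / μ s := by
  rcases eq_or_ne (μ s) 0 with hs0 | hs0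
  · simp [Measure.restrict_eq_zero.2 hs0]
  by_cases hfin : ∫⁻ x in s, ENNReal.ofReal (‖f x‖ ^ 2) ∂μ = ⊤
  · rw [hfin, ENNReal.top_div_of_ne_top hs]
    exact le_top
  have hf2 : IntegrableOn (fun x => ‖f x‖ ^ 2) s μ :=
    ⟨hf.1.norm.pow 2, (hasFiniteIntegral_iff_ofReal (ae_of_all _ fun _ => sq_nonneg _)).2
      (lt_top_iff_ne_top.2 hfin)⟩
  have jensen : ‖⨍ x in s, f x ∂μ‖ ^ 2 ≤ ⨍ x in s, ‖f x‖ ^ 2 ∂μ :=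
    ((convexOn_norm convex_univ).pow (fun _ _ => norm_nonneg _) 2).map_set_average_le
      (continuous_norm.pow 2).continuousOn isClosed_univ hs0 hs (ae_of_all _ fun _ => mem_univ _)
      hf hf2
  calc ENNReal.ofReal (‖⨍ x in s, f x ∂μ‖ ^ 2)
      ≤ ENNReal.ofReal (⨍ x in s, ‖f x‖ ^ 2 ∂μ) := ENNReal.ofReal_le_ofReal jensen
    _ = _ := by rw [ofReal_setAverage hf2 (ae_of_all _ fun _ => sq_nonneg _)]

theorem setAverage_const_sub [CompleteSpace E] {f : α → E} (hs0 : μ s ≠ 0) (hs : μ s ≠ ⊤)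
    (hf : IntegrableOn f s μ) (c : E) :
    ⨍ x in s, (c - f x) ∂μ = c - ⨍ x in s, f x ∂μ := by
  have : IsFiniteMeasure (μ.restrict s) := isFiniteMeasure_restrict.2 hs
  rw [setAverage_eq, integral_sub (integrable_const c) hf, setIntegral_const, smul_sub, smul_smul,
    inv_mul_cancel₀ ((measureReal_ne_zero_iff hs).2 hs0), one_smul, setAverage_eq]

theorem setAverage_prod_sub {β : Type*} [MeasurableSpace β] [SFinite μ] {ν : Measure β} [SFinite ν]
    {t : Set β} {f : α → E} {g : β → E} (hs0 : μ s ≠ 0) (hs : μ s ≠ ⊤) (ht0 : ν t ≠ 0)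
    (ht : ν t ≠ ⊤) (hf : IntegrableOn f s μ) (hg : IntegrableOn g t ν) :
    ⨍ z in s ×ˢ t, (f z.1 - g z.2) ∂μ.prod ν = ⨍ x in s, f x ∂μ - ⨍ y in t, g y ∂ν := by
  have : IsFiniteMeasure (μ.restrict s) := isFiniteMeasure_restrict.2 hs
  have : IsFiniteMeasure (ν.restrict t) := isFiniteMeasure_restrict.2 ht
  have hμ : μ.real s ≠ 0 := (measureReal_ne_zero_iff hs).2 hs0
  have hν : ν.real t ≠ 0 := (measureReal_ne_zero_iff ht).2 ht0
  rw [setAverage_eq, ← Measure.prod_restrict, integral_sub (hf.comp_fst _) (hg.comp_snd _),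
    integral_fun_fst, integral_fun_snd, measureReal_prod_prod,
    measureReal_restrict_apply_univ, measureReal_restrict_apply_univ, setAverage_eq, setAverage_eq,
    smul_sub, smul_smul, smul_smul]
  congr 2 <;> field_simp

end Average

section Gagliardo

variable {E : Type*} [NormedAddCommGroup E] {g : ℝ → E} {β T : ℝ}

noncomputable def gagliardoKernel (g : ℝ → E) (β t s : ℝ) : ENNReal :=
  ENNReal.ofReal (‖g t - g s‖ ^ 2 / (t - s) ^ (1 + 2 * β))

noncomputable def gagliardoSeminormSq (g : ℝ → E) (β T : ℝ) : ENNReal :=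
  ∫⁻ t in Ioo 0 T, ∫⁻ s in Ioo 0 t, gagliardoKernel g β t s

theorem gagliardoSeminormSq_congr {F : Type*} [NormedAddCommGroup F] {f : ℝ → F}
    (h : ∀ t ∈ Icc 0 T, ∀ s ∈ Icc 0 T, ‖g t - g s‖ = ‖f t - f s‖) :
    gagliardoSeminormSq g β T = gagliardoSeminormSq f β T := by
  refine setLIntegral_congr_fun measurableSet_Ioo fun t ht => ?_
  refine setLIntegral_congr_fun measurableSet_Ioo fun s hs => ?_
  rw [gagliardoKernel, gagliardoKernel,
    h t (Ioo_subset_Icc_self ht) s ⟨hs.1.le, hs.2.le.trans ht.2.le⟩]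

theorem ofReal_sq_norm_sub_le_mul_gagliardoKernel (hβ : 0 ≤ 1 + 2 * β) {s t d : ℝ} (hst : s < t)
    (hd : t - s ≤ d) :
    ENNReal.ofReal (‖g t - g s‖ ^ 2) ≤
      ENNReal.ofReal (d ^ (1 + 2 * β)) * gagliardoKernel g β t s := by
  have hpos : 0 < (t - s) ^ (1 + 2 * β) := Real.rpow_pos_of_pos (sub_pos.2 hst) _
  have hdpos : 0 ≤ d ^ (1 + 2 * β) := Real.rpow_nonneg (by linarith) _
  rw [gagliardoKernel, ← ENNReal.ofReal_mul hdpos]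
  refine ENNReal.ofReal_le_ofReal ?_
  rw [mul_div, le_div_iff₀ hpos, mul_comm]
  exact mul_le_mul_of_nonneg_right (Real.rpow_le_rpow (sub_pos.2 hst).le hd hβ) (sq_nonneg _)

theorem measurable_gagliardoKernel (hg : Continuous g) :
    Measurable fun z : ℝ × ℝ => gagliardoKernel g β z.1 z.2 := by
  have hnum : Continuous fun z : ℝ × ℝ => ‖g z.1 - g z.2‖ ^ 2 := by fun_prop
  exact ENNReal.measurable_ofReal.comp (hnum.measurable.div (by fun_prop))

theorem setLIntegral_prod_gagliardoKernel_le (hg : Continuous g) {s t : Set ℝ}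
    (hs : MeasurableSet s) (hsT : s ⊆ Ioo 0 T) (hts : ∀ u ∈ s, t ⊆ Ioo 0 u) :
    ∫⁻ z in s ×ˢ t, gagliardoKernel g β z.1 z.2 ≤ gagliardoSeminormSq g β T := by
  rw [Measure.volume_eq_prod, ← Measure.prod_restrict,
    lintegral_prod _ (measurable_gagliardoKernel hg).aemeasurable]
  calc ∫⁻ u in s, ∫⁻ v in t, gagliardoKernel g β u v
      ≤ ∫⁻ u in s, ∫⁻ v in Ioo 0 u, gagliardoKernel g β u v :=
        setLIntegral_mono' hs fun u hu => lintegral_mono_set (hts u hu)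
    _ ≤ gagliardoSeminormSq g β T := lintegral_mono_set hsT

end Gagliardo

section DyadicAverage

variable {E : Type*} [NormedAddCommGroup E] [NormedSpace ℝ E] [CompleteSpace E] {g : ℝ → E}
  {β T a t : ℝ}

noncomputable def dyadicAverage (g : ℝ → E) (a : ℝ) : E :=
  ⨍ v in Ioo (a / 2) a, g v

theorem ofReal_sq_norm_sub_dyadicAverage_le (hg : Continuous g) (hβ : 0 ≤ 1 + 2 * β)
    (ht : 0 < t) :
    ENNReal.ofReal (‖g t - dyadicAverage g t‖ ^ 2) ≤
      ENNReal.ofReal (2 * t ^ (2 * β)) * ∫⁻ s in Ioo 0 t, gagliardoKernel g β t s := by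
  have hvol : volume (Ioo (t / 2) t) = ENNReal.ofReal (t / 2) := by
    rw [Real.volume_Ioo]; ring_nf
  have hvol0 : volume (Ioo (t / 2) t) ≠ 0 := by
    rw [hvol]; exact ENNReal.ofReal_pos.2 (by positivity) |>.ne'
  calc ENNReal.ofReal (‖g t - dyadicAverage g t‖ ^ 2)
      = ENNReal.ofReal (‖⨍ s in Ioo (t / 2) t, (g t - g s)‖ ^ 2) := by
        rw [dyadicAverage, setAverage_const_sub hvol0 measure_Ioo_lt_top.ne
          (hg.integrableOn_Icc.mono_set Ioo_subset_Icc_self)]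
    _ ≤ (∫⁻ s in Ioo (t / 2) t, ENNReal.ofReal (‖g t - g s‖ ^ 2)) / volume (Ioo (t / 2) t) :=
        ofReal_sq_norm_setAverage_le measure_Ioo_lt_top.ne
          ((continuous_const.sub hg).integrableOn_Icc.mono_set Ioo_subset_Icc_self)
    _ ≤ ENNReal.ofReal (t ^ (1 + 2 * β)) * (∫⁻ s in Ioo 0 t, gagliardoKernel g β t s) /
          ENNReal.ofReal (t / 2) := by
        rw [hvol]
        gcongr ?_ / _
        calc _ ≤ ∫⁻ s in Ioo (t / 2) t,
                ENNReal.ofReal (t ^ (1 + 2 * β)) * gagliardoKernel g β t s :=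
              setLIntegral_mono' measurableSet_Ioo fun s hs =>
                ofReal_sq_norm_sub_le_mul_gagliardoKernel hβ hs.2 (by linarith [hs.1])
          _ = ENNReal.ofReal (t ^ (1 + 2 * β)) * ∫⁻ s in Ioo (t / 2) t, gagliardoKernel g β t s :=
              lintegral_const_mul' _ _ ENNReal.ofReal_ne_top
          _ ≤ _ := by gcongr; positivity
    _ = ENNReal.ofReal (2 * t ^ (2 * β)) * ∫⁻ s in Ioo 0 t, gagliardoKernel g β t s := by
        rw [ENNReal.mul_div_right_comm, ← ENNReal.ofReal_div_of_pos (by positivity),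
          Real.rpow_add ht, Real.rpow_one]
        congr 2
        field_simp

theorem ofReal_sq_norm_dyadicAverage_sub_half_le (hg : Continuous g) (hβ : 0 ≤ 1 + 2 * β)
    (ha : 0 < a) (haT : a ≤ T) :
    ENNReal.ofReal (‖dyadicAverage g a - dyadicAverage g (a / 2)‖ ^ 2) ≤
      ENNReal.ofReal (8 * a ^ (2 * β - 1)) * gagliardoSeminormSq g β T := by
  set R := Ioo (a / 2) a ×ˢ Ioo (a / 2 / 2) (a / 2)
  have hvol : volume R = ENNReal.ofReal (a ^ 2 / 8) := by
    rw [Measure.volume_eq_prod, Measure.prod_prod, Real.volume_Ioo, Real.volume_Ioo,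
      ← ENNReal.ofReal_mul (by linarith)]
    ring_nf
  have hpos : ∀ b : ℝ, 0 < b → volume (Ioo (b / 2) b) ≠ 0 := fun b hb => by
    rw [Real.volume_Ioo]; exact ENNReal.ofReal_pos.2 (by linarith) |>.ne'
  have hint : ∀ b : ℝ, IntegrableOn g (Ioo (b / 2) b) :=
    fun b => hg.integrableOn_Icc.mono_set Ioo_subset_Icc_self
  calc ENNReal.ofReal (‖dyadicAverage g a - dyadicAverage g (a / 2)‖ ^ 2)
      = ENNReal.ofReal (‖⨍ z in R, (g z.1 - g z.2)‖ ^ 2) := by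
        rw [Measure.volume_eq_prod, setAverage_prod_sub (hpos a ha) measure_Ioo_lt_top.ne
          (hpos _ (by positivity)) measure_Ioo_lt_top.ne (hint a) (hint _)]
        rfl
    _ ≤ (∫⁻ z in R, ENNReal.ofReal (‖g z.1 - g z.2‖ ^ 2)) / volume R :=
        ofReal_sq_norm_setAverage_le (by rw [hvol]; exact ENNReal.ofReal_ne_top)
          ((by fun_prop : Continuous fun z : ℝ × ℝ => g z.1 - g z.2).continuousOn
            |>.integrableOn_compact (isCompact_Icc.prod isCompact_Icc)
            |>.mono_set (prod_mono Ioo_subset_Icc_self Ioo_subset_Icc_self))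
    _ ≤ ENNReal.ofReal (a ^ (1 + 2 * β)) * gagliardoSeminormSq g β T /
          ENNReal.ofReal (a ^ 2 / 8) := by
        rw [hvol]
        gcongr ?_ / _
        calc _ ≤ ∫⁻ z in R, ENNReal.ofReal (a ^ (1 + 2 * β)) * gagliardoKernel g β z.1 z.2 :=
              setLIntegral_mono' (measurableSet_Ioo.prod measurableSet_Ioo) fun z hz =>
                ofReal_sq_norm_sub_le_mul_gagliardoKernel hβ (hz.2.2.trans hz.1.1)
                  (by linarith [hz.1.2, hz.2.1])
          _ = ENNReal.ofReal (a ^ (1 + 2 * β)) * ∫⁻ z in R, gagliardoKernel g β z.1 z.2 :=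
              lintegral_const_mul' _ _ ENNReal.ofReal_ne_top
          _ ≤ _ := by
              gcongr
              exact setLIntegral_prod_gagliardoKernel_le hg measurableSet_Ioo
                (Ioo_subset_Ioo (by positivity : (0 : ℝ) ≤ a / 2) haT)
                fun u hu => Ioo_subset_Ioo (by positivity : (0 : ℝ) ≤ a / 2 / 2) hu.1.le
    _ = ENNReal.ofReal (8 * a ^ (2 * β - 1)) * gagliardoSeminormSq g β T := by
        rw [ENNReal.mul_div_right_comm, ← ENNReal.ofReal_div_of_pos (by positivity),
          show 1 + 2 * β = 2 * β - 1 + 2 by ring, Real.rpow_add ha, Real.rpow_two]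
        congr 2
        field_simp


theorem tendsto_dyadicAverage (hg : Continuous g) :
    Tendsto (dyadicAverage g) (𝓝[>] 0) (𝓝 (g 0)) := by
  refine Metric.tendsto_nhds.2 fun ε hε => ?_
  obtain ⟨δ, hδ, hgδ⟩ := Metric.continuousAt_iff.1 hg.continuousAt (ε / 2) (half_pos hε)
  filter_upwards [Ioo_mem_nhdsGT hδ] with a ha
  have hvol : volume (Ioo (a / 2) a) ≠ 0 := by
    rw [Real.volume_Ioo]; exact ENNReal.ofReal_pos.2 (by linarith [ha.1]) |>.ne'
  have hmem : dyadicAverage g a ∈ Metric.closedBall (g 0) (ε / 2) :=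
    (convex_closedBall _ _).set_average_mem Metric.isClosed_closedBall hvol
      measure_Ioo_lt_top.ne
      ((ae_restrict_mem measurableSet_Ioo).mono fun v hv => (hgδ (by
        rw [Real.dist_0_eq_abs, abs_of_pos (by linarith [hv.1, ha.1])]
        exact hv.2.trans ha.2)).le)
      (hg.integrableOn_Icc.mono_set Ioo_subset_Icc_self)
  exact (Metric.mem_closedBall.1 hmem).trans_lt (half_lt_self hε)

theorem dist_dyadicAverage_div_two_pow_le (hg : Continuous g) (hβ : 0 ≤ 1 + 2 * β)
    (hS : gagliardoSeminormSq g β T ≠ ⊤) (ha : 0 < a) (haT : a ≤ T) (n : ℕ) :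
    dist (dyadicAverage g (a / 2 ^ n)) (dyadicAverage g (a / 2 ^ (n + 1))) ≤
      √(8 * (gagliardoSeminormSq g β T).toReal) * a ^ (β - 1 / 2) * (2 ^ (β - 1 / 2))⁻¹ ^ n := by
  have hscale : (a / 2 ^ n) ^ (2 * β - 1) = (a ^ (β - 1 / 2) * (2 ^ (β - 1 / 2))⁻¹ ^ n) ^ 2 := by
    rw [show 2 * β - 1 = (β - 1 / 2) * (2 : ℕ) by push_cast; ring,
      Real.rpow_mul_natCast (by positivity), Real.div_rpow ha.le (by positivity),
      ← Real.rpow_natCast_mul zero_le_two, mul_comm, Real.rpow_mul_natCast zero_le_two, inv_pow,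
      div_eq_mul_inv]
  have hcore := le_mul_toReal_of_ofReal_le_mul (by positivity) hS
    (ofReal_sq_norm_dyadicAverage_sub_half_le hg hβ (by positivity : 0 < a / 2 ^ n)
      (haT.trans' (div_le_self ha.le (one_le_pow₀ one_le_two))))
  rw [hscale] at hcore
  rw [dist_eq_norm, pow_succ, ← div_div]
  refine (pow_le_pow_iff_left₀ (norm_nonneg _) (by positivity) two_ne_zero).1 (hcore.trans_eq ?_)
  linear_combination -(a ^ (β - 1 / 2) * (2 ^ (β - 1 / 2))⁻¹ ^ n) ^ 2 *
    Real.sq_sqrt (by positivity : 0 ≤ 8 * (gagliardoSeminormSq g β T).toReal)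

/-- The dyadic increments of the averages decay like `ρⁿ` with `ρ = 2^(1/2 - β)`, and summing them
costs a factor `(1 - ρ)⁻¹`. -/
noncomputable def dyadicConst (β : ℝ) : ℝ :=
  8 / (1 - (2 ^ (β - 1 / 2))⁻¹) ^ 2

theorem sq_norm_dyadicAverage_sub_apply_zero_le (hg : Continuous g) (hβ : 1 / 2 < β)
    (hS : gagliardoSeminormSq g β T ≠ ⊤) (ha : 0 < a) (haT : a ≤ T) :
    ‖dyadicAverage g a - g 0‖ ^ 2 ≤
      dyadicConst β * a ^ (2 * β - 1) * (gagliardoSeminormSq g β T).toReal := by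
  have hρ : (2 ^ (β - 1 / 2) : ℝ)⁻¹ < 1 :=
    inv_lt_one_of_one_lt₀ (Real.one_lt_rpow one_lt_two (by linarith))
  have hlim : Tendsto (fun n : ℕ => dyadicAverage g (a / 2 ^ n)) atTop (𝓝 (g 0)) :=
    (tendsto_dyadicAverage hg).comp <| tendsto_nhdsWithin_iff.2
      ⟨tendsto_const_nhds.div_atTop (tendsto_pow_atTop_atTop_of_one_lt one_lt_two),
        Eventually.of_forall fun n => show 0 < a / 2 ^ n by positivity⟩
  have hdist := dist_le_of_le_geometric_of_tendsto₀ _ _ hρ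
    (dist_dyadicAverage_div_two_pow_le hg (by linarith) hS ha haT) hlim
  rw [pow_zero, div_one, dist_eq_norm] at hdist
  calc ‖dyadicAverage g a - g 0‖ ^ 2
      ≤ (√(8 * (gagliardoSeminormSq g β T).toReal) * a ^ (β - 1 / 2) /
          (1 - (2 ^ (β - 1 / 2))⁻¹)) ^ 2 :=
        pow_le_pow_left₀ (norm_nonneg _) hdist 2
    _ = dyadicConst β * a ^ (2 * β - 1) * (gagliardoSeminormSq g β T).toReal := by
        rw [dyadicConst, div_pow, mul_pow, Real.sq_sqrt (by positivity),
          ← Real.rpow_mul_natCast ha.le]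
        push_cast
        ring_nf

theorem sq_norm_dyadicAverage_le (hg : Continuous g) (hT : 0 < T) :
    ‖dyadicAverage g T‖ ^ 2 ≤ 2 / T * ∫ t in Ioo 0 T, ‖g t‖ ^ 2 := by
  have hint : IntegrableOn (fun t => ‖g t‖ ^ 2) (Ioo 0 T) :=
    (by fun_prop : Continuous fun t => ‖g t‖ ^ 2).integrableOn_Icc.mono_set Ioo_subset_Icc_self
  have hvol : volume (Ioo (T / 2) T) = ENNReal.ofReal (T / 2) := by
    rw [Real.volume_Ioo]; ring_nf
  refine (ENNReal.ofReal_le_ofReal_iff (by positivity)).1 ?_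
  calc ENNReal.ofReal (‖dyadicAverage g T‖ ^ 2)
      ≤ (∫⁻ t in Ioo (T / 2) T, ENNReal.ofReal (‖g t‖ ^ 2)) / volume (Ioo (T / 2) T) :=
        ofReal_sq_norm_setAverage_le measure_Ioo_lt_top.ne
          (hg.integrableOn_Icc.mono_set Ioo_subset_Icc_self)
    _ ≤ ENNReal.ofReal (∫ t in Ioo 0 T, ‖g t‖ ^ 2) / ENNReal.ofReal (T / 2) := by
        rw [hvol, ofReal_integral_eq_lintegral_ofReal hint (ae_of_all _ fun _ => sq_nonneg _)]
        gcongr ?_ / _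
        exact lintegral_mono_set (Ioo_subset_Ioo_left (by positivity))
    _ = ENNReal.ofReal (2 / T * ∫ t in Ioo 0 T, ‖g t‖ ^ 2) := by
        rw [← ENNReal.ofReal_div_of_pos (by positivity)]
        congr 1
        field_simp

theorem sq_norm_apply_zero_le (hg : Continuous g) (hβ : 1 / 2 < β) (hT : 0 < T)
    (hS : gagliardoSeminormSq g β T ≠ ⊤) :
    ‖g 0‖ ^ 2 ≤ 4 / T * (∫ t in Ioo 0 T, ‖g t‖ ^ 2) +
      2 * dyadicConst β * T ^ (2 * β - 1) * (gagliardoSeminormSq g β T).toReal := by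
  have h₁ := sq_norm_dyadicAverage_le hg hT
  have h₂ := sq_norm_dyadicAverage_sub_apply_zero_le hg hβ hS hT le_rfl
  have h₃ := sq_norm_le_two_mul_add_sq_norm_sub (g 0) (dyadicAverage g T)
  rw [norm_sub_rev] at h₃
  linear_combination h₃ + 2 * h₁ + 2 * h₂

theorem ofReal_sq_norm_le_add_mul_lintegral_gagliardoKernel (hg : Continuous g) (hβ : 1 / 2 < β)
    (hS : gagliardoSeminormSq g β T ≠ ⊤) (ht : 0 < t) (htT : t ≤ T) :
    ENNReal.ofReal (‖g t‖ ^ 2) ≤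
      ENNReal.ofReal (2 * ‖g 0‖ ^ 2 +
          4 * dyadicConst β * T ^ (2 * β - 1) * (gagliardoSeminormSq g β T).toReal) +
        ENNReal.ofReal (8 * T ^ (2 * β)) * ∫⁻ s in Ioo 0 t, gagliardoKernel g β t s := by
  set φ := ∫⁻ s in Ioo 0 t, gagliardoKernel g β t s
  have hT2 : 0 < T ^ (2 * β) := Real.rpow_pos_of_pos (ht.trans_le htT) _
  by_cases hφ : φ = ⊤
  · rw [hφ, ENNReal.mul_top (by simpa using hT2), add_top]
    exact le_top
  have hκ : 0 ≤ dyadicConst β := by unfold dyadicConst; positivity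
  have h₁ := le_mul_toReal_of_ofReal_le_mul (by positivity) hφ
    (ofReal_sq_norm_sub_dyadicAverage_le hg (by linarith) ht)
  have h₂ := sq_norm_dyadicAverage_sub_apply_zero_le hg hβ hS ht htT
  have h₃ := sq_norm_le_two_mul_add_sq_norm_sub (g t) (g 0)
  have h₄ := sq_norm_le_two_mul_add_sq_norm_sub (g t - g 0) (g t - dyadicAverage g t)
  rw [sub_sub_sub_cancel_left] at h₄
  have h₅ : t ^ (2 * β) * φ.toReal ≤ T ^ (2 * β) * φ.toReal :=
    mul_le_mul_of_nonneg_right (Real.rpow_le_rpow ht.le htT (by linarith)) ENNReal.toReal_nonneg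
  have h₆ : dyadicConst β * t ^ (2 * β - 1) * (gagliardoSeminormSq g β T).toReal ≤
      dyadicConst β * T ^ (2 * β - 1) * (gagliardoSeminormSq g β T).toReal := by
    have := Real.rpow_le_rpow ht.le htT (by linarith : 0 ≤ 2 * β - 1)
    gcongr
  rw [← ENNReal.ofReal_toReal hφ, ← ENNReal.ofReal_mul (by positivity),
    ← ENNReal.ofReal_add (by have := Real.rpow_nonneg (ht.le.trans htT) (2 * β - 1); positivity)
      (by positivity)]
  refine ENNReal.ofReal_le_ofReal ?_
  linarith

theorem integral_sq_norm_le (hg : Continuous g) (hβ : 1 / 2 < β) (hT : 0 < T)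
    (hS : gagliardoSeminormSq g β T ≠ ⊤) :
    ∫ t in Ioo 0 T, ‖g t‖ ^ 2 ≤
      2 * T * ‖g 0‖ ^ 2 +
        (4 * dyadicConst β + 8) * T ^ (2 * β) * (gagliardoSeminormSq g β T).toReal := by
  set S := gagliardoSeminormSq g β T
  set K := 2 * ‖g 0‖ ^ 2 + 4 * dyadicConst β * T ^ (2 * β - 1) * S.toReal with hK_def
  have hκ : 0 ≤ dyadicConst β := by unfold dyadicConst; positivity
  have hK : 0 ≤ K := by
    have := Real.rpow_nonneg hT.le (2 * β - 1)
    positivity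
  have hint : Integrable (fun t => ‖g t‖ ^ 2) (volume.restrict (Ioo 0 T)) :=
    (by fun_prop : Continuous fun t => ‖g t‖ ^ 2).integrableOn_Icc.mono_set Ioo_subset_Icc_self
  refine (ENNReal.ofReal_le_ofReal_iff (by positivity)).1 ?_
  calc ENNReal.ofReal (∫ t in Ioo 0 T, ‖g t‖ ^ 2)
      = ∫⁻ t in Ioo 0 T, ENNReal.ofReal (‖g t‖ ^ 2) :=
        ofReal_integral_eq_lintegral_ofReal hint (ae_of_all _ fun _ => sq_nonneg _)
    _ ≤ ∫⁻ t in Ioo 0 T, (ENNReal.ofReal K +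
          ENNReal.ofReal (8 * T ^ (2 * β)) * ∫⁻ s in Ioo 0 t, gagliardoKernel g β t s) :=
        setLIntegral_mono' measurableSet_Ioo fun t ht =>
          ofReal_sq_norm_le_add_mul_lintegral_gagliardoKernel hg hβ hS ht.1 ht.2.le
    _ = ENNReal.ofReal K * ENNReal.ofReal T + ENNReal.ofReal (8 * T ^ (2 * β)) * S := by
        rw [lintegral_add_left measurable_const, setLIntegral_const, Real.volume_Ioo, sub_zero,
          lintegral_const_mul' _ _ ENNReal.ofReal_ne_top]
        rfl
    _ = ENNReal.ofReal (K * T + 8 * T ^ (2 * β) * S.toReal) := by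
        rw [ENNReal.ofReal_add (mul_nonneg hK hT.le) (by positivity), ENNReal.ofReal_mul hK,
          ENNReal.ofReal_mul (by positivity : (0 : ℝ) ≤ 8 * T ^ (2 * β)), ENNReal.ofReal_toReal hS]
    _ = ENNReal.ofReal (2 * T * ‖g 0‖ ^ 2 + (4 * dyadicConst β + 8) * T ^ (2 * β) * S.toReal) := by
        rw [hK_def, Real.rpow_sub_one hT.ne']
        congr 1
        field_simp
        ring

theorem value_at_zero_norm_equivalent_of_continuous (hg : Continuous g) (hβ : 1 / 2 < β)
    (hT : 0 < T) (hS : gagliardoSeminormSq g β T ≠ ⊤) :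
    (4 / T + 2 * dyadicConst β * T ^ (2 * β - 1) + 1)⁻¹ *
        (‖g 0‖ ^ 2 + (gagliardoSeminormSq g β T).toReal) ≤
      (∫ t in Ioo 0 T, ‖g t‖ ^ 2) + (gagliardoSeminormSq g β T).toReal ∧
    (∫ t in Ioo 0 T, ‖g t‖ ^ 2) + (gagliardoSeminormSq g β T).toReal ≤
      (2 * T + (4 * dyadicConst β + 8) * T ^ (2 * β) + 1) *
        (‖g 0‖ ^ 2 + (gagliardoSeminormSq g β T).toReal) := by
  have h₁ := sq_norm_apply_zero_le hg hβ hT hS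
  have h₂ := integral_sq_norm_le hg hβ hT hS
  have hκ : 0 ≤ dyadicConst β := by unfold dyadicConst; positivity
  have hS0 : 0 ≤ (gagliardoSeminormSq g β T).toReal := ENNReal.toReal_nonneg
  have hL0 : 0 ≤ ∫ t in Ioo 0 T, ‖g t‖ ^ 2 :=
    setIntegral_nonneg measurableSet_Ioo fun _ _ => sq_nonneg _
  have hT' : 0 ≤ T ^ (2 * β - 1) := Real.rpow_nonneg hT.le _
  constructor
  · rw [inv_mul_le_iff₀ (by positivity)]
    nlinarith [mul_nonneg (by positivity : 0 ≤ 4 / T) hS0,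
      mul_nonneg (by positivity : 0 ≤ 2 * dyadicConst β * T ^ (2 * β - 1)) hL0]
  · nlinarith [mul_nonneg hT.le hS0, sq_nonneg ‖g 0‖,
      mul_nonneg (by positivity : 0 ≤ (4 * dyadicConst β + 8) * T ^ (2 * β)) (sq_nonneg ‖g 0‖)]

end DyadicAverage

theorem ContinuousOn.exists_continuous_eqOn_Icc {X : Type*} [TopologicalSpace X] {f : ℝ → X}
    {a b : ℝ} (hab : a ≤ b) (hf : ContinuousOn f (Icc a b)) :
    ∃ g : ℝ → X, Continuous g ∧ EqOn g f (Icc a b) :=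
  ⟨IccExtend hab ((Icc a b).domRestrict f), continuous_IccExtend_iff.2 hf.domRestrict,
    fun _ ht => IccExtend_of_mem _ _ ht⟩

theorem value_at_zero_norm_equivalent_general {V : Type*} [NormedAddCommGroup V]
    [InnerProductSpace ℂ V]
    (β T : ℝ) (hβ0 : 1 / 2 < β) (hT : 0 < T) :
    ∃ c > (0:ℝ), ∃ C > (0:ℝ), ∀ f : ℝ → V, ContinuousOn f (Icc 0 T) →
      (∫⁻ t in Ioo (0:ℝ) T, ∫⁻ s in Ioo (0:ℝ) t,
          ENNReal.ofReal (‖f t - f s‖ ^ 2 / (t - s) ^ (1 + 2 * β)) ≠ ⊤) →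
      (c * (‖f 0‖ ^ 2 +
            (∫⁻ t in Ioo (0:ℝ) T, ∫⁻ s in Ioo (0:ℝ) t,
              ENNReal.ofReal (‖f t - f s‖ ^ 2 / (t - s) ^ (1 + 2 * β))).toReal)
          ≤ (∫ t in Ioo (0:ℝ) T, ‖f t‖ ^ 2) +
            (∫⁻ t in Ioo (0:ℝ) T, ∫⁻ s in Ioo (0:ℝ) t,
              ENNReal.ofReal (‖f t - f s‖ ^ 2 / (t - s) ^ (1 + 2 * β))).toReal) ∧
      ((∫ t in Ioo (0:ℝ) T, ‖f t‖ ^ 2) +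
            (∫⁻ t in Ioo (0:ℝ) T, ∫⁻ s in Ioo (0:ℝ) t,
              ENNReal.ofReal (‖f t - f s‖ ^ 2 / (t - s) ^ (1 + 2 * β))).toReal
          ≤ C * (‖f 0‖ ^ 2 +
            (∫⁻ t in Ioo (0:ℝ) T, ∫⁻ s in Ioo (0:ℝ) t,
              ENNReal.ofReal (‖f t - f s‖ ^ 2 / (t - s) ^ (1 + 2 * β))).toReal)) := by
  have hκ : 0 ≤ dyadicConst β := by unfold dyadicConst; positivity
  refine ⟨(4 / T + 2 * dyadicConst β * T ^ (2 * β - 1) + 1)⁻¹, by positivity,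
    2 * T + (4 * dyadicConst β + 8) * T ^ (2 * β) + 1, by positivity, fun f hf hfin => ?_⟩
  -- Bochner averages need a complete space: extend `f` continuously to `ℝ` and embed it in the
  -- completion of `V`.
  obtain ⟨f₀, hf₀, hf₀f⟩ := hf.exists_continuous_eqOn_Icc hT.le
  set g : ℝ → UniformSpace.Completion V := fun t => f₀ t
  have hg : Continuous g := (UniformSpace.Completion.continuous_coe V).comp hf₀
  have hnorm_sub : ∀ t ∈ Icc 0 T, ∀ s ∈ Icc 0 T, ‖g t - g s‖ = ‖f t - f s‖ := fun t ht s hs => by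
    rw [← UniformSpace.Completion.coe_sub, UniformSpace.Completion.norm_coe, hf₀f ht, hf₀f hs]
  have hnorm_apply : ∀ t ∈ Icc 0 T, ‖g t‖ = ‖f t‖ := fun t ht => by
    rw [UniformSpace.Completion.norm_coe, hf₀f ht]
  have hS : gagliardoSeminormSq f β T = gagliardoSeminormSq g β T :=
    (gagliardoSeminormSq_congr hnorm_sub).symm
  have hL : ∫ t in Ioo 0 T, ‖f t‖ ^ 2 = ∫ t in Ioo 0 T, ‖g t‖ ^ 2 :=
    setIntegral_congr_fun measurableSet_Ioo fun t ht => by rw [hnorm_apply t (Ioo_subset_Icc_self ht)]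
  rw [show (∫⁻ t in Ioo 0 T, ∫⁻ s in Ioo 0 t,
      ENNReal.ofReal (‖f t - f s‖ ^ 2 / (t - s) ^ (1 + 2 * β))) = gagliardoSeminormSq g β T
      from hS] at hfin ⊢
  rw [hL, ← hnorm_apply 0 ⟨le_rfl, hT.le⟩]
  exact value_at_zero_norm_equivalent_of_continuous hg hβ0 hT hfin

/-- **Proposition 3.5, case β > 1/2.** On `H^β(0,T;V)`, `β ∈ (1/2,1)`,
the norm `(‖f(0)‖² + [f]²_{H^β})^{1/2}` is equivalent to the standard norm
`(‖f‖²_{L²} + [f]²_{H^β})^{1/2}`. -/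
theorem value_at_zero_norm_equivalent {V : Type*} [NormedAddCommGroup V]
    [InnerProductSpace ℂ V] [CompleteSpace V]
    (β T : ℝ) (hβ0 : 1 / 2 < β) (hβ1 : β < 1) (hT : 0 < T) :
    ∃ c > (0:ℝ), ∃ C > (0:ℝ), ∀ f : ℝ → V, ContinuousOn f (Icc 0 T) →
      (∫⁻ t in Ioo (0:ℝ) T, ∫⁻ s in Ioo (0:ℝ) t,
          ENNReal.ofReal (‖f t - f s‖ ^ 2 / (t - s) ^ (1 + 2 * β)) ≠ ⊤) →
      (c * (‖f 0‖ ^ 2 +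
            (∫⁻ t in Ioo (0:ℝ) T, ∫⁻ s in Ioo (0:ℝ) t,
              ENNReal.ofReal (‖f t - f s‖ ^ 2 / (t - s) ^ (1 + 2 * β))).toReal)
          ≤ (∫ t in Ioo (0:ℝ) T, ‖f t‖ ^ 2) +
            (∫⁻ t in Ioo (0:ℝ) T, ∫⁻ s in Ioo (0:ℝ) t,
              ENNReal.ofReal (‖f t - f s‖ ^ 2 / (t - s) ^ (1 + 2 * β))).toReal) ∧
      ((∫ t in Ioo (0:ℝ) T, ‖f t‖ ^ 2) +
            (∫⁻ t in Ioo (0:ℝ) T, ∫⁻ s in Ioo (0:ℝ) t,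
              ENNReal.ofReal (‖f t - f s‖ ^ 2 / (t - s) ^ (1 + 2 * β))).toReal
          ≤ C * (‖f 0‖ ^ 2 +
            (∫⁻ t in Ioo (0:ℝ) T, ∫⁻ s in Ioo (0:ℝ) t,
              ENNReal.ofReal (‖f t - f s‖ ^ 2 / (t - s) ^ (1 + 2 * β))).toReal)) :=
  value_at_zero_norm_equivalent_general β T hβ0 hT
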